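/- For every ρ ∈ (0,1) and every integer n ≥ 0, ∑_{0 ≤ i ≤ j ≤ n} min(ρⁱ, ρ^{j−i}, ρ^{n−j}) ≤ 4 ρ^{n/4} / ((1 − ρ)(1 − ρ^{1/2})). (This double-sum inequality is established and used in the proof of Lemma 17 to bound the variance terms in the law of large numbers for the observed Fisher information.) -/

import Mathlib

/-!
Put `a = i`, `b = j - i`, `c = n - j`: the pairs `i ≤ j ≤ n` are the compositions `a + b + c = n`,
and the summand is at most `ρ ^ A` for any part `A`, in particular the largest one. Attributing each
composition to a rotation whose first part is largest costs a factor `3`. The compositions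
`(A, B, C)` with largest part `A` are encoded injectively by pairs `(p, q) ∈ [0, n]²` with
`n / 4 + p + q / 2 ≤ A`, so together they contribute at most
`ρ ^ (n / 4) ∑ ρ ^ p (ρ ^ (1 / 2)) ^ q ≤ ρ ^ (n / 4) / ((1 - ρ) (1 - ρ ^ (1 / 2)))`.
-/

open Finset

theorem Finset.sum_le_sum_of_injOn {ι κ M : Type*} [AddCommMonoid M] [PartialOrder M]
    [IsOrderedAddMonoid M] {s : Finset ι} {t : Finset κ} {f : ι → M} {g : κ → M} (e : ι → κ)
    (he : Set.InjOn e s) (hst : Set.MapsTo e s t) (hg : ∀ y ∈ t, 0 ≤ g y)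
    (hfg : ∀ x ∈ s, f x ≤ g (e x)) : ∑ x ∈ s, f x ≤ ∑ y ∈ t, g y := by
  classical
  calc ∑ x ∈ s, f x ≤ ∑ x ∈ s, g (e x) := sum_le_sum hfg
    _ = ∑ y ∈ s.image e, g y := (sum_image he).symm
    _ ≤ ∑ y ∈ t, g y :=
      sum_le_sum_of_subset_of_nonneg (image_subset_iff.2 hst) fun y hy _ => hg y hy

theorem geom_sum_le_one_div {K : Type*} [Field K] [LinearOrder K] [IsStrictOrderedRing K] {x : K}
    (hx : 0 ≤ x) (h : x < 1) (N : ℕ) : ∑ i ∈ range N, x ^ i ≤ 1 / (1 - x) := by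
  simpa using geom_sum_Ico_le_of_lt_one (m := 0) (n := N) hx h

theorem Real.pow_le_rpow_mul_pow_mul_rpow_pow {ρ x y : ℝ} (hρ0 : 0 < ρ) (hρ1 : ρ ≤ 1)
    {A p q : ℕ} (h : x + p + y * q ≤ A) : ρ ^ A ≤ ρ ^ x * ρ ^ p * (ρ ^ y) ^ q := by
  rw [← Real.rpow_natCast ρ A, ← Real.rpow_natCast ρ p, ← Real.rpow_mul_natCast hρ0.le,
    ← Real.rpow_add hρ0, ← Real.rpow_add hρ0]
  exact Real.rpow_le_rpow_of_exponent_ge hρ0 hρ1 h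

def largestFirst (n : ℕ) : Set (ℕ × ℕ × ℕ) :=
  {v | v.1 + v.2.1 + v.2.2 = n ∧ v.2.1 ≤ v.1 ∧ v.2.2 ≤ v.1}

def rotateTriple (v : ℕ × ℕ × ℕ) : ℕ × ℕ × ℕ := (v.2.1, v.2.2, v.1)

theorem rotateTriple_injective : Function.Injective rotateTriple := by
  rintro ⟨a, b, c⟩ ⟨a', b', c'⟩ h
  simp_all [rotateTriple]

theorem mem_largestFirst_or {n : ℕ} {v : ℕ × ℕ × ℕ} (hv : v.1 + v.2.1 + v.2.2 = n) :
    v ∈ largestFirst n ∨ rotateTriple v ∈ largestFirst n ∨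
      rotateTriple (rotateTriple v) ∈ largestFirst n := by
  obtain ⟨a, b, c⟩ := v
  simp only [largestFirst, rotateTriple, Set.mem_ofPred_eq] at hv ⊢
  omega

/-- For `(A, B, C) ∈ largestFirst n`, `q = min B (A - C)` is the position of `B` in the interval
`[max 0 (n - 2A), min A (n - A)]` of parts admissible next to `A`, so `q ≤ 3A - n`, and
`p = A - ⌈(n + q) / 3⌉`. -/
def largestFirstCode (v : ℕ × ℕ × ℕ) : ℕ × ℕ :=
  let q := min v.2.1 (v.1 - v.2.2)
  (v.1 - (v.1 + v.2.1 + v.2.2 + q + 2) / 3, q)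

theorem largestFirstCode_injOn (n : ℕ) : Set.InjOn largestFirstCode (largestFirst n) := by
  rintro ⟨a, b, c⟩ ⟨hn, hb, hc⟩ ⟨a', b', c'⟩ ⟨hn', hb', hc'⟩ h
  simp only [largestFirstCode, Prod.mk.injEq] at h hn hb hc hn' hb' hc' ⊢
  omega

theorem largestFirstCode_mapsTo (n : ℕ) :
    Set.MapsTo largestFirstCode (largestFirst n) ↑(range (n + 1) ×ˢ range (n + 1)) := by
  rintro ⟨a, b, c⟩ ⟨hn, hb, hc⟩
  simp only [largestFirstCode, coe_product, coe_range, Set.mem_prod, Set.mem_Iio] at hn hb hc ⊢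
  omega

theorem add_largestFirstCode_le {n : ℕ} {v : ℕ × ℕ × ℕ} (hv : v ∈ largestFirst n) :
    n + 4 * (largestFirstCode v).1 + 2 * (largestFirstCode v).2 ≤ 4 * v.1 := by
  obtain ⟨a, b, c⟩ := v
  obtain ⟨hn, hb, hc⟩ := hv
  simp only [largestFirstCode] at hn hb hc ⊢
  omega

theorem sum_indicator_largestFirst_le {ι : Type*} {ρ : ℝ} (hρ0 : 0 < ρ) (hρ1 : ρ < 1) (n : ℕ)
    {s : Finset ι} {f : ι → ℕ × ℕ × ℕ} (hf : Set.InjOn f s) :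
    ∑ x ∈ s, (largestFirst n).indicator (fun v => ρ ^ v.1) (f x) ≤
      ρ ^ ((n : ℝ) / 4) / ((1 - ρ) * (1 - ρ ^ (1 / 2 : ℝ))) := by
  classical
  set σ := ρ ^ (1 / 2 : ℝ)
  have hσ0 : 0 < σ := Real.rpow_pos_of_pos hρ0 _
  have hσ1 : σ < 1 := Real.rpow_lt_one hρ0.le hρ1 (by norm_num)
  have hcode_le (v : ℕ × ℕ × ℕ) (hv : v ∈ largestFirst n) :
      (n : ℝ) / 4 + (largestFirstCode v).1 + 1 / 2 * (largestFirstCode v).2 ≤ v.1 := by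
    have h : (n : ℝ) + 4 * (largestFirstCode v).1 + 2 * (largestFirstCode v).2 ≤ 4 * v.1 := by
      exact_mod_cast add_largestFirstCode_le hv
    linarith
  rw [sum_indicator_eq_sum_filter]
  calc ∑ x ∈ s with f x ∈ largestFirst n, ρ ^ (f x).1
      ≤ ∑ y ∈ range (n + 1) ×ˢ range (n + 1), ρ ^ ((n : ℝ) / 4) * ρ ^ y.1 * σ ^ y.2 :=
        sum_le_sum_of_injOn (largestFirstCode ∘ f)
          ((largestFirstCode_injOn n).comp (hf.mono (filter_subset _ _))
            fun x hx => (mem_filter.1 hx).2)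
          (fun x hx => largestFirstCode_mapsTo n (mem_filter.1 hx).2) (fun y _ => by positivity)
          fun x hx => Real.pow_le_rpow_mul_pow_mul_rpow_pow hρ0 hρ1.le
            (hcode_le (f x) (mem_filter.1 hx).2)
    _ = ρ ^ ((n : ℝ) / 4) * (∑ p ∈ range (n + 1), ρ ^ p) * ∑ q ∈ range (n + 1), σ ^ q := by
        rw [sum_product, mul_sum _ (fun p => ρ ^ p), sum_mul_sum]
    _ ≤ ρ ^ ((n : ℝ) / 4) * (1 / (1 - ρ)) * (1 / (1 - σ)) := by
        gcongr
        · exact geom_sum_le_one_div hρ0.le hρ1 _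
        · exact geom_sum_le_one_div hσ0.le hσ1 _
    _ = ρ ^ ((n : ℝ) / 4) / ((1 - ρ) * (1 - σ)) := by rw [mul_one_div, mul_one_div, div_div]

theorem min_pow_le_sum_indicator_largestFirst {ρ : ℝ} (hρ : 0 ≤ ρ) {n : ℕ} {v : ℕ × ℕ × ℕ}
    (hv : v.1 + v.2.1 + v.2.2 = n) :
    min (ρ ^ v.1) (min (ρ ^ v.2.1) (ρ ^ v.2.2)) ≤
      (largestFirst n).indicator (fun w => ρ ^ w.1) v +
        (largestFirst n).indicator (fun w => ρ ^ w.1) (rotateTriple v) +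
        (largestFirst n).indicator (fun w => ρ ^ w.1) (rotateTriple (rotateTriple v)) := by
  obtain ⟨a, b, c⟩ := v
  have h0 (w : ℕ × ℕ × ℕ) : 0 ≤ (largestFirst n).indicator (fun w => ρ ^ w.1) w :=
    Set.indicator_nonneg (fun w _ => pow_nonneg hρ _) w
  have ha : min (ρ ^ a) (min (ρ ^ b) (ρ ^ c)) ≤ ρ ^ a := min_le_left _ _
  have hb : min (ρ ^ a) (min (ρ ^ b) (ρ ^ c)) ≤ ρ ^ b := (min_le_right _ _).trans (min_le_left _ _)
  have hc : min (ρ ^ a) (min (ρ ^ b) (ρ ^ c)) ≤ ρ ^ c :=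
    (min_le_right _ _).trans (min_le_right _ _)
  rcases mem_largestFirst_or hv with h | h | h <;> simp only [rotateTriple] at h ⊢ <;>
    rw [Set.indicator_of_mem h] <;> linarith [h0 (a, b, c), h0 (b, c, a), h0 (c, a, b)]

theorem geometric_min_double_sum_bound
    (ρ : ℝ) (hρ0 : 0 < ρ) (hρ1 : ρ < 1) (n : ℕ) :
    ∑ j ∈ Finset.range (n + 1), ∑ i ∈ Finset.range (j + 1),
        min (ρ ^ i) (min (ρ ^ (j - i)) (ρ ^ (n - j))) ≤
      4 * ρ ^ ((n : ℝ) / 4) / ((1 - ρ) * (1 - ρ ^ ((1 : ℝ) / 2))) := by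
  set S := (range (n + 1)).sigma fun j => range (j + 1)
  let parts : (_ : ℕ) × ℕ → ℕ × ℕ × ℕ := fun x => (x.2, x.1 - x.2, n - x.1)
  have hparts : Set.InjOn parts S := by
    rintro ⟨j, i⟩ hx ⟨j', i'⟩ hx' h
    simp only [S, coe_sigma, Set.mem_sigma_iff, coe_range, Set.mem_Iio, parts,
      Prod.mk.injEq] at hx hx' h
    obtain ⟨rfl, rfl⟩ : j = j' ∧ i = i' := by omega
    rfl
  have hsum (x) (hx : x ∈ S) : (parts x).1 + (parts x).2.1 + (parts x).2.2 = n := by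
    simp only [S, mem_sigma, mem_range, parts] at hx ⊢
    omega
  have h1 := sum_indicator_largestFirst_le hρ0 hρ1 n hparts
  have h2 := sum_indicator_largestFirst_le hρ0 hρ1 n (rotateTriple_injective.comp_injOn hparts)
  have h3 := sum_indicator_largestFirst_le hρ0 hρ1 n
    (rotateTriple_injective.comp_injOn (rotateTriple_injective.comp_injOn hparts))
  simp only [Function.comp_apply] at h2 h3
  calc _ = ∑ x ∈ S, min (ρ ^ (parts x).1) (min (ρ ^ (parts x).2.1) (ρ ^ (parts x).2.2)) := by
        rw [sum_sigma']
    _ ≤ ∑ x ∈ S, ((largestFirst n).indicator (fun w => ρ ^ w.1) (parts x) +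
          (largestFirst n).indicator (fun w => ρ ^ w.1) (rotateTriple (parts x)) +
          (largestFirst n).indicator (fun w => ρ ^ w.1) (rotateTriple (rotateTriple (parts x)))) :=
        sum_le_sum fun x hx => min_pow_le_sum_indicator_largestFirst hρ0.le (hsum x hx)
    _ ≤ 3 * (ρ ^ ((n : ℝ) / 4) / ((1 - ρ) * (1 - ρ ^ ((1 : ℝ) / 2)))) := by
        rw [sum_add_distrib, sum_add_distrib]
        linarith
    _ ≤ 4 * ρ ^ ((n : ℝ) / 4) / ((1 - ρ) * (1 - ρ ^ ((1 : ℝ) / 2))) := by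
        have hden : 0 < (1 - ρ) * (1 - ρ ^ ((1 : ℝ) / 2)) :=
          mul_pos (by linarith)
            (by linarith [Real.rpow_lt_one hρ0.le hρ1 (by norm_num : (0 : ℝ) < 1 / 2)])
        rw [mul_div_assoc]
        gcongr
        norm_num
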